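/- Energy estimate for the split-form semi-discretization of linear convection with periodic coupling: if the diagonal metric matrices [Al m] are symmetric and commute with the diagonal norm matrix P (tensor-product of diagonal SBP norms), then for the operator M = (1/2) Σ_{l,m} a_m (Dξl [Al m] + [Al m] Dξl), the symmetric part of P·M reduces to boundary terms: P M + M^T P = (1/2) Σ_{l,m} a_m (E_l [Al m] + [Al m] E_l), where E_l is the tensor-product boundary matrix in direction l. -/

import Mathlib

/-!
For a symmetric `P` commuting with a symmetric `A`, the map `M ↦ P M + Mᵀ P` sends the split
operator `D A + A D` to `(P D + (P D)ᵀ) A + A (P D + (P D)ᵀ)`; with `P D = Q` this is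
`E A + A E` by the SBP property `Q + Qᵀ = E`. Everything else is linearity in `M`.
-/

open Matrix

namespace Matrix

variable {n R : Type*} [Fintype n] [CommRing R]

theorem IsDiag.commute [DecidableEq n] {A B : Matrix n n R} (hA : A.IsDiag) (hB : B.IsDiag) :
    Commute A B := by
  rw [← hA.diagonal_diag, ← hB.diagonal_diag]
  exact commute_diagonal _ _

/-- `P M + Mᵀ P`: for `u' = M u` it is the matrix of `d/dt (uᵀ P u)`. -/
def weightedSymmPart (P : Matrix n n R) : Matrix n n R →ₗ[R] Matrix n n R where
  toFun M := P * M + Mᵀ * P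
  map_add' M M' := by
    simp only [Matrix.mul_add, transpose_add, Matrix.add_mul]
    abel
  map_smul' c M := by
    simp only [Matrix.mul_smul, transpose_smul, Matrix.smul_mul, smul_add, RingHom.id_apply]

theorem weightedSymmPart_apply (P M : Matrix n n R) :
    weightedSymmPart P M = P * M + Mᵀ * P := rfl

theorem weightedSymmPart_splitForm {P D A : Matrix n n R} (hP : P.IsSymm) (hA : A.IsSymm)
    (hPA : Commute P A) :
    weightedSymmPart P (D * A + A * D) = (P * D + (P * D)ᵀ) * A + A * (P * D + (P * D)ᵀ) := by
  have hDP : Dᵀ * P = (P * D)ᵀ := by rw [transpose_mul, hP.eq]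
  calc weightedSymmPart P (D * A + A * D)
      = P * D * A + P * A * D + Aᵀ * (Dᵀ * P) + Dᵀ * (Aᵀ * P) := by
        simp only [weightedSymmPart_apply, Matrix.mul_add, Matrix.add_mul, transpose_add,
          transpose_mul, Matrix.mul_assoc]
        abel
    _ = P * D * A + A * (P * D) + A * (P * D)ᵀ + (P * D)ᵀ * A := by
        rw [hA.eq, ← hPA.eq, ← Matrix.mul_assoc Dᵀ P A, hDP, hPA.eq, Matrix.mul_assoc A P D]
    _ = (P * D + (P * D)ᵀ) * A + A * (P * D + (P * D)ᵀ) := by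
        noncomm_ring

end Matrix

theorem splitform_energy_boundary_terms_general
    (N : ℕ) (P : Matrix (Fin N) (Fin N) ℝ)
    (D Q E : Fin 3 → Matrix (Fin N) (Fin N) ℝ)
    (A : Fin 3 → Fin 3 → Matrix (Fin N) (Fin N) ℝ)
    (a : Fin 3 → ℝ)
    (hPdiag : P.IsDiag)
    (hAdiag : ∀ l m, (A l m).IsDiag)
    (hPD : ∀ l, P * D l = Q l)
    (hSBP : ∀ l, Q l + (Q l)ᵀ = E l)
    (M : Matrix (Fin N) (Fin N) ℝ)
    (hM : M = (1 / 2 : ℝ) • ∑ l, ∑ m, a m • (D l * A l m + A l m * D l)) :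
    P * M + Mᵀ * P =
      (1 / 2 : ℝ) • ∑ l, ∑ m, a m • (E l * A l m + A l m * E l) := by
  have hsplit : ∀ l m, weightedSymmPart P (D l * A l m + A l m * D l) =
      E l * A l m + A l m * E l := fun l m => by
    rw [weightedSymmPart_splitForm hPdiag.isSymm (hAdiag l m).isSymm
      (hPdiag.commute (hAdiag l m)), hPD l, hSBP l]
  rw [← weightedSymmPart_apply, hM]
  simp only [map_smul, map_sum, hsplit]

/-- Energy estimate for the split-form semi-discretization of linear
convection: the symmetric part of `P·M` reduces to boundary terms. -/
theorem splitform_energy_boundary_terms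
    (N : ℕ) (P : Matrix (Fin N) (Fin N) ℝ)
    (D Q E : Fin 3 → Matrix (Fin N) (Fin N) ℝ)
    (A : Fin 3 → Fin 3 → Matrix (Fin N) (Fin N) ℝ)
    (a : Fin 3 → ℝ)
    (hPdiag : P.IsDiag) (hPposdef : P.PosDef)
    (hAdiag : ∀ l m, (A l m).IsDiag)
    (hPD : ∀ l, P * D l = Q l)
    (hSBP : ∀ l, Q l + (Q l)ᵀ = E l)
    (M : Matrix (Fin N) (Fin N) ℝ)
    (hM : M = (1 / 2 : ℝ) • ∑ l, ∑ m, a m • (D l * A l m + A l m * D l)) :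
    P * M + Mᵀ * P =
      (1 / 2 : ℝ) • ∑ l, ∑ m, a m • (E l * A l m + A l m * E l) :=
  splitform_energy_boundary_terms_general N P D Q E A a hPdiag hAdiag hPD hSBP M hM
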